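/- Let Q be a group, Θ : ℓ^∞(Q) → ℝ a right-invariant mean, and h : Q → ℝ_{>0} with h and 1/h bounded. For g ∈ Q define H(g) := Θ(u ↦ h(ug)/h(u)) (assume u ↦ h(ug)/h(u) is bounded for each g). Then for every g ∈ Q, H(g) · H(g⁻¹) ≥ 1. -/

import Mathlib

/-!
Right-invariance turns `H(g⁻¹)` into the mean of `u ↦ h(u)/h(ug)`, the pointwise reciprocal of
`F(u) = h(ug)/h(u)`, whose mean is `H(g)`. So it suffices that a mean satisfies Jensen's inequality
`Θ(1/F) ≥ 1/Θ(F)` for positive `F` with `1/F` bounded (which keeps `Θ(F)` away from `0`); this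
follows from the tangent-line bound `1/x ≥ 2t - t²x` at `t = 1/Θ(F)` by monotonicity and linearity.
-/

def IsBddFun {Q : Type*} (f : Q → ℝ) : Prop := ∃ M : ℝ, ∀ u : Q, |f u| ≤ M

namespace IsBddFun

variable {Q : Type*} {f g : Q → ℝ}

lemma const (c : ℝ) : IsBddFun (fun _ : Q => c) :=
  ⟨|c|, fun _ => le_rfl⟩

lemma add (hf : IsBddFun f) (hg : IsBddFun g) : IsBddFun (f + g) := by
  obtain ⟨M, hM⟩ := hf
  obtain ⟨N, hN⟩ := hg
  exact ⟨M + N, fun u => (abs_add_le _ _).trans (add_le_add (hM u) (hN u))⟩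

lemma smul (c : ℝ) (hf : IsBddFun f) : IsBddFun (c • f) := by
  obtain ⟨M, hM⟩ := hf
  refine ⟨|c| * M, fun u => ?_⟩
  rw [Pi.smul_apply, smul_eq_mul, abs_mul]
  exact mul_le_mul_of_nonneg_left (hM u) (abs_nonneg c)

lemma sub (hf : IsBddFun f) (hg : IsBddFun g) : IsBddFun (f - g) := by
  simpa [sub_eq_add_neg] using hf.add (hg.smul (-1))

lemma comp_mul_right [Mul Q] (hf : IsBddFun f) (a : Q) : IsBddFun (fun u => f (u * a)) := by
  obtain ⟨M, hM⟩ := hf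
  exact ⟨M, fun u => hM (u * a)⟩

lemma affine (hf : IsBddFun f) (a b : ℝ) : IsBddFun (fun u => a + b * f u) :=
  (const a).add (hf.smul b)

lemma exists_pos_le_of_inv (hinv : IsBddFun (fun u => (f u)⁻¹)) (hpos : ∀ u, 0 < f u) :
    ∃ ε > 0, ∀ u, ε ≤ f u := by
  obtain ⟨M, hM⟩ := hinv
  have hle : ∀ u, (f u)⁻¹ ≤ |M| + 1 := fun u => (le_abs_self _).trans ((hM u).trans (by
    linarith [le_abs_self M]))
  have hMpos : 0 < |M| + 1 := by positivity
  exact ⟨(|M| + 1)⁻¹, inv_pos.2 hMpos, fun u => (inv_le_comm₀ (hpos u) hMpos).1 (hle u)⟩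

end IsBddFun

structure IsMean {Q : Type*} (Θ : (Q → ℝ) → ℝ) : Prop where
  map_add : ∀ f g : Q → ℝ, IsBddFun f → IsBddFun g → Θ (f + g) = Θ f + Θ g
  map_smul : ∀ (c : ℝ) (f : Q → ℝ), IsBddFun f → Θ (c • f) = c * Θ f
  nonneg : ∀ f : Q → ℝ, IsBddFun f → (∀ u, 0 ≤ f u) → 0 ≤ Θ f
  map_one : Θ (fun _ => 1) = 1

namespace IsMean

variable {Q : Type*} {Θ : (Q → ℝ) → ℝ} {f g : Q → ℝ}

lemma map_const (hΘ : IsMean Θ) (c : ℝ) : Θ (fun _ => c) = c := by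
  have e : (fun _ : Q => c) = c • (fun _ : Q => (1 : ℝ)) := by ext; simp
  rw [e, hΘ.map_smul c _ (IsBddFun.const 1), hΘ.map_one, mul_one]

lemma mono (hΘ : IsMean Θ) (hf : IsBddFun f) (hg : IsBddFun g) (hle : ∀ u, f u ≤ g u) :
    Θ f ≤ Θ g := by
  have hsplit : Θ g = Θ f + Θ (g - f) := by
    simpa using hΘ.map_add f (g - f) hf (hg.sub hf)
  have := hΘ.nonneg _ (hg.sub hf) (fun u => sub_nonneg.2 (hle u))
  linarith

lemma map_affine (hΘ : IsMean Θ) (hf : IsBddFun f) (a b : ℝ) :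
    Θ (fun u => a + b * f u) = a + b * Θ f := by
  rw [show (fun u => a + b * f u) = (fun _ : Q => a) + b • f from rfl,
    hΘ.map_add _ _ (IsBddFun.const a) (hf.smul b), hΘ.map_const, hΘ.map_smul _ _ hf]

lemma pos_of_le (hΘ : IsMean Θ) (hf : IsBddFun f) {ε : ℝ} (hε : 0 < ε) (hle : ∀ u, ε ≤ f u) :
    0 < Θ f :=
  hε.trans_le (hΘ.map_const ε ▸ hΘ.mono (IsBddFun.const ε) hf hle)

lemma inv_map_le_map_inv (hΘ : IsMean Θ) (hf : IsBddFun f) (hpos : ∀ u, 0 < f u)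
    (hinv : IsBddFun (fun u => (f u)⁻¹)) (hΘf : 0 < Θ f) :
    (Θ f)⁻¹ ≤ Θ (fun u => (f u)⁻¹) := by
  set t := (Θ f)⁻¹
  have htangent : ∀ u, 2 * t + -(t * t) * f u ≤ (f u)⁻¹ := fun u => by
    have hfu := hpos u
    have : 0 ≤ (f u)⁻¹ * (t * f u - 1) ^ 2 := by positivity
    have hinv_mul : (f u)⁻¹ * f u = 1 := inv_mul_cancel₀ hfu.ne'
    nlinarith
  have hmean := hΘ.mono (hf.affine _ _) hinv htangent
  rw [hΘ.map_affine hf] at hmean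
  have ht : t * Θ f = 1 := inv_mul_cancel₀ hΘf.ne'
  linear_combination hmean + t * ht

lemma one_le_map_mul_map_inv (hΘ : IsMean Θ) (hf : IsBddFun f) (hpos : ∀ u, 0 < f u)
    (hinv : IsBddFun (fun u => (f u)⁻¹)) : 1 ≤ Θ f * Θ (fun u => (f u)⁻¹) := by
  obtain ⟨ε, hε, hle⟩ := hinv.exists_pos_le_of_inv hpos
  have hΘf := hΘ.pos_of_le hf hε hle
  calc 1 = Θ f * (Θ f)⁻¹ := (mul_inv_cancel₀ hΘf.ne').symm
    _ ≤ Θ f * Θ (fun u => (f u)⁻¹) :=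
      mul_le_mul_of_nonneg_left (hΘ.inv_map_le_map_inv hf hpos hinv hΘf) hΘf.le

end IsMean

theorem stmt_8_general {Q : Type*} [Group Q] (Θ : (Q → ℝ) → ℝ)
    (hadd : ∀ f g : Q → ℝ, IsBddFun f → IsBddFun g → Θ (f + g) = Θ f + Θ g)
    (hsmul : ∀ (c : ℝ) (f : Q → ℝ), IsBddFun f → Θ (c • f) = c * Θ f)
    (hpos : ∀ f : Q → ℝ, IsBddFun f → (∀ u, 0 ≤ f u) → 0 ≤ Θ f)
    (hone : Θ (fun _ => 1) = 1)
    (hrinv : ∀ f : Q → ℝ, IsBddFun f → ∀ g : Q, Θ (fun u => f (u * g)) = Θ f)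
    (h : Q → ℝ) (hh : ∀ u, 0 < h u)
    (hquot : ∀ g : Q, IsBddFun (fun u => h (u * g) / h u))
    (H : Q → ℝ) (hH : ∀ g : Q, H g = Θ (fun u => h (u * g) / h u)) :
    ∀ g : Q, 1 ≤ H g * H g⁻¹ := by
  intro g
  have hΘ : IsMean Θ := ⟨hadd, hsmul, hpos, hone⟩
  have hrecip : (fun u => (h (u * g) / h u)⁻¹) = fun u => h (u * g * g⁻¹) / h (u * g) := by
    simp only [inv_div, mul_inv_cancel_right]
  have hHinv : H g⁻¹ = Θ (fun u => (h (u * g) / h u)⁻¹) := by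
    rw [hH, hrecip, hrinv _ (hquot g⁻¹) g]
  rw [hH g, hHinv]
  refine hΘ.one_le_map_mul_map_inv (hquot g) (fun u => div_pos (hh _) (hh _)) ?_
  rw [hrecip]
  exact (hquot g⁻¹).comp_mul_right g

/-- For a right-invariant mean `Θ` and `h > 0` with `h`, `1/h` bounded, the averaged
cocycle `H(g) = Θ(u ↦ h(ug)/h(u))` satisfies `H(g) · H(g⁻¹) ≥ 1`. -/
theorem stmt_8 {Q : Type*} [Group Q] (Θ : (Q → ℝ) → ℝ)
    (hadd : ∀ f g : Q → ℝ, IsBddFun f → IsBddFun g → Θ (f + g) = Θ f + Θ g)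
    (hsmul : ∀ (c : ℝ) (f : Q → ℝ), IsBddFun f → Θ (c • f) = c * Θ f)
    (hpos : ∀ f : Q → ℝ, IsBddFun f → (∀ u, 0 ≤ f u) → 0 ≤ Θ f)
    (hone : Θ (fun _ => 1) = 1)
    (hrinv : ∀ f : Q → ℝ, IsBddFun f → ∀ g : Q, Θ (fun u => f (u * g)) = Θ f)
    (h : Q → ℝ) (hh : ∀ u, 0 < h u)
    (hb : IsBddFun h) (hb' : IsBddFun (fun u => (h u)⁻¹))
    (hquot : ∀ g : Q, IsBddFun (fun u => h (u * g) / h u))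
    (H : Q → ℝ) (hH : ∀ g : Q, H g = Θ (fun u => h (u * g) / h u)) :
    ∀ g : Q, 1 ≤ H g * H g⁻¹ :=
  stmt_8_general Θ hadd hsmul hpos hone hrinv h hh hquot H hH
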